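/- Let α be a C² immersed closed plane curve (periodic with period 1, α′ never 0) having only finitely many inflection points in one period, all of which are s-inflection points, and let t₀ be an s-inflection point with unit normal N₀. Then N₀ (and likewise −N₀) is a local extrema changing vector at t₀: there exists δ > 0 such that for every sufficiently small ε > 0, the number of local extrema of t ↦ ⟨α(t), R_ε N₀⟩ on (t₀ − δ, t₀ + δ) and the number of local extrema of t ↦ ⟨α(t), R_{−ε} N₀⟩ on (t₀ − δ, t₀ + δ) differ by exactly 2. -/

import Mathlib

/-!
Let `T` and `N = R_{π/2} T` be the unit tangent and normal at `t₀`. The height function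
`h_θ(t) = ⟪α t, R_θ N⟫` has derivative `cos θ ⟪α′, N⟫ - sin θ ⟪α′, T⟫ = cos θ ⟪α′, T⟫ (φ - tan θ)`,
where `φ = ⟪α′, N⟫ / ⟪α′, T⟫` is the slope of `α′` in the frame `(T, N)`, and
`φ′ = κ_s |α′|³ / ⟪α′, T⟫²`. Since there are finitely many inflection points per period, `κ_s`
vanishes near `t₀` only at `t₀`, and it changes sign there; so `φ` has a strict local maximum or
minimum `φ(t₀) = 0`. For small `ε > 0`, `φ` then misses one of the levels `tan (±ε)` (no critical
point of `h_{±ε}`) and crosses the other exactly twice (a local minimum and a local maximum).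
Replacing `N` by `-N` only negates the height functions.
-/

open Real Set
open scoped RealInnerProductSpace

noncomputable section

/-- ℝ² with the Euclidean inner product. -/
abbrev E2 : Type := EuclideanSpace ℝ (Fin 2)

/-- The signed curvature `κ_s = (x′y″ − y′x″)/((x′)² + (y′)²)^{3/2}` of a plane
curve `α = (x, y)`. -/
def signedCurv2 (α : ℝ → E2) (t : ℝ) : ℝ :=
  (deriv (fun s => α s 0) t * deriv (deriv (fun s => α s 1)) t -
    deriv (fun s => α s 1) t * deriv (deriv (fun s => α s 0)) t) / ‖deriv α t‖ ^ 3

/-- Rotation of the plane by angle `θ`. -/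
def rot2 (θ : ℝ) (x : E2) : E2 :=
  WithLp.toLp 2 ![Real.cos θ * x 0 - Real.sin θ * x 1, Real.sin θ * x 0 + Real.cos θ * x 1]

/-- The unit normal of `α` at parameter `t`: the rotation by `π/2` of the unit
tangent vector. -/
def unitNormal (α : ℝ → E2) (t : ℝ) : E2 :=
  rot2 (Real.pi / 2) (‖deriv α t‖⁻¹ • deriv α t)

/-- The number of local maxima of a (1-periodic) real function over one period. -/
def numLocalMax (f : ℝ → ℝ) : ℕ :=
  Set.ncard {t : ℝ | t ∈ Set.Ico (0:ℝ) 1 ∧ IsLocalMax f t}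

/-- The set of local extrema of a (1-periodic) real function in one period. -/
def extremaSet (f : ℝ → ℝ) : Set ℝ :=
  {t : ℝ | t ∈ Set.Ico (0:ℝ) 1 ∧ (IsLocalMax f t ∨ IsLocalMin f t)}

/-- `μ̂(w, α)`: the number of local extrema of `t ↦ ⟪α(t), w⟫` over one period. -/
def muHat (α : ℝ → E2) (w : E2) : ℕ :=
  Set.ncard (extremaSet (fun s => ⟪α s, w⟫))

/-- `g` changes sign at `t₀`: every neighbourhood of `t₀` contains points where `g`
is positive and points where it is negative. -/
def SignChangeAt (g : ℝ → ℝ) (t₀ : ℝ) : Prop :=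
  ∀ ε > 0, (∃ s : ℝ, |s - t₀| < ε ∧ 0 < g s) ∧ (∃ s : ℝ, |s - t₀| < ε ∧ g s < 0)

/-- The set of inflection points (parameters where the signed curvature vanishes) of
`α` in one period. -/
def inflectionSet (α : ℝ → E2) : Set ℝ :=
  {t : ℝ | t ∈ Set.Ico (0:ℝ) 1 ∧ signedCurv2 α t = 0}

/-- The number of local extrema of `t ↦ f t` in the open interval `(a, b)`. -/
def localExtremaCount (f : ℝ → ℝ) (a b : ℝ) : ℕ :=
  Set.ncard {t : ℝ | t ∈ Set.Ioo a b ∧ (IsLocalMax f t ∨ IsLocalMin f t)}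

open Filter Topology

section LocalExtremaCount

variable {f : ℝ → ℝ} {a b : ℝ}

lemma localExtremaCount_neg :
    localExtremaCount (fun t => -f t) a b = localExtremaCount f a b := by
  unfold localExtremaCount
  congr 1
  ext t
  simp only [mem_ofPred_eq, IsLocalMax, IsLocalMin, IsMaxFilter, IsMinFilter, neg_le_neg_iff]
  tauto

lemma localExtremaCount_eq_zero_of_deriv_ne_zero (h : ∀ t ∈ Ioo a b, deriv f t ≠ 0) :
    localExtremaCount f a b = 0 := by
  have hempty : {t | t ∈ Ioo a b ∧ (IsLocalMax f t ∨ IsLocalMin f t)} = ∅ :=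
    Set.eq_empty_of_forall_notMem fun t ht =>
      h t ht.1 (ht.2.elim IsLocalMax.deriv_eq_zero IsLocalMin.deriv_eq_zero)
  rw [localExtremaCount, hempty, Set.ncard_empty]

lemma localExtremaCount_eq_two {t₁ t₂ : ℝ} (ha : a < t₁) (h₁₂ : t₁ < t₂) (hb : t₂ < b)
    (hf : ∀ t ∈ Ioo a b, DifferentiableAt ℝ f t)
    (h₁ : ∀ t ∈ Ioo a t₁, deriv f t < 0) (h₂ : ∀ t ∈ Ioo t₁ t₂, 0 < deriv f t)
    (h₃ : ∀ t ∈ Ioo t₂ b, deriv f t < 0) :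
    localExtremaCount f a b = 2 := by
  have hdiff : ∀ {c d}, a ≤ c → d ≤ b → DifferentiableOn ℝ f (Ioo c d) := fun hc hd t ht =>
    (hf t ⟨hc.trans_lt ht.1, ht.2.trans_le hd⟩).differentiableWithinAt
  have hmin : IsLocalMin f t₁ :=
    isLocalMin_of_deriv_Ioo ha h₁₂ (hf t₁ ⟨ha, h₁₂.trans hb⟩).continuousAt (hdiff le_rfl
      (h₁₂.trans hb).le) (hdiff ha.le hb.le) (fun t ht => (h₁ t ht).le) (fun t ht => (h₂ t ht).le)
  have hmax : IsLocalMax f t₂ :=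
    isLocalMax_of_deriv_Ioo h₁₂ hb (hf t₂ ⟨ha.trans h₁₂, hb⟩).continuousAt (hdiff ha.le hb.le)
      (hdiff (ha.trans h₁₂).le le_rfl) (fun t ht => (h₂ t ht).le) (fun t ht => (h₃ t ht).le)
  rw [localExtremaCount, ← Set.ncard_pair h₁₂.ne]
  congr 1
  ext t
  simp only [mem_ofPred_eq, mem_insert_iff, mem_singleton_iff]
  constructor
  · rintro ⟨⟨hat, htb⟩, hext⟩
    have hzero : deriv f t = 0 := hext.elim IsLocalMax.deriv_eq_zero IsLocalMin.deriv_eq_zero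
    by_contra! hne
    rcases lt_or_gt_of_ne hne.1 with ht₁ | ht₁
    · exact (h₁ t ⟨hat, ht₁⟩).ne hzero
    rcases lt_or_gt_of_ne hne.2 with ht₂ | ht₂
    · exact (h₂ t ⟨ht₁, ht₂⟩).ne' hzero
    · exact (h₃ t ⟨ht₂, htb⟩).ne hzero
  · rintro (rfl | rfl)
    · exact ⟨⟨ha, h₁₂.trans hb⟩, Or.inr hmin⟩
    · exact ⟨⟨ha.trans h₁₂, hb⟩, Or.inl hmax⟩

end LocalExtremaCount

def IsStrictPeak (φ : ℝ → ℝ) (a t₀ b : ℝ) : Prop :=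
  StrictMonoOn φ (Icc a t₀) ∧ StrictAntiOn φ (Icc t₀ b)

lemma IsStrictPeak.apply_le {φ : ℝ → ℝ} {a t₀ b t : ℝ} (h : IsStrictPeak φ a t₀ b)
    (ht : t ∈ Icc a b) : φ t ≤ φ t₀ := by
  rcases le_total t t₀ with htt₀ | htt₀
  · exact h.1.monotoneOn ⟨ht.1, htt₀⟩ ⟨ht.1.trans htt₀, le_rfl⟩ htt₀
  · exact h.2.antitoneOn ⟨le_rfl, htt₀.trans ht.2⟩ ⟨htt₀, ht.2⟩ htt₀

lemma isStrictPeak_of_hasDerivAt {φ φ' : ℝ → ℝ} {a t₀ b : ℝ} (hat : a ≤ t₀) (htb : t₀ ≤ b)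
    (hφ : ∀ t ∈ Icc a b, HasDerivAt φ (φ' t) t)
    (hL : ∀ t ∈ Ioo a t₀, 0 < φ' t) (hR : ∀ t ∈ Ioo t₀ b, φ' t < 0) :
    IsStrictPeak φ a t₀ b := by
  have hφ' : ∀ {c d}, a ≤ c → d ≤ b → ∀ t ∈ Icc c d, HasDerivAt φ (φ' t) t :=
    fun hc hd t ht => hφ t ⟨hc.trans ht.1, ht.2.trans hd⟩
  constructor
  · refine strictMonoOn_of_hasDerivWithinAt_pos (convex_Icc a t₀)
      (fun t ht => (hφ' le_rfl htb t ht).continuousAt.continuousWithinAt) (fun t ht => ?_)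
      (by rwa [interior_Icc])
    exact (hφ' le_rfl htb t (interior_subset ht)).hasDerivWithinAt
  · refine strictAntiOn_of_hasDerivWithinAt_neg (convex_Icc t₀ b)
      (fun t ht => (hφ' hat le_rfl t ht).continuousAt.continuousWithinAt) (fun t ht => ?_)
      (by rwa [interior_Icc])
    exact (hφ' hat le_rfl t (interior_subset ht)).hasDerivWithinAt

lemma mem_Ioo_or_mem_Ioo_of_abs_sub_lt {s t₀ δ : ℝ} (hs : |s - t₀| < δ) (hne : s ≠ t₀) :
    s ∈ Ioo (t₀ - δ) t₀ ∨ s ∈ Ioo t₀ (t₀ + δ) := by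
  rw [abs_sub_lt_iff] at hs
  rcases lt_or_gt_of_ne hne with h | h
  · exact Or.inl ⟨by linarith, h⟩
  · exact Or.inr ⟨h, by linarith⟩

lemma isStrictPeak_or_of_signChangeAt {φ g p : ℝ → ℝ} {t₀ δ : ℝ} (hδ : 0 < δ)
    (hφ : ∀ t ∈ Icc (t₀ - δ) (t₀ + δ), HasDerivAt φ (g t * p t) t)
    (hp : ∀ t ∈ Icc (t₀ - δ) (t₀ + δ), 0 < p t)
    (hg : ∀ t ∈ Icc (t₀ - δ) (t₀ + δ), g t = 0 ↔ t = t₀)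
    (hchange : SignChangeAt g t₀) :
    IsStrictPeak φ (t₀ - δ) t₀ (t₀ + δ) ∨ IsStrictPeak (fun t => -φ t) (t₀ - δ) t₀ (t₀ + δ) := by
  set I := Icc (t₀ - δ) (t₀ + δ)
  have hLI : Ioo (t₀ - δ) t₀ ⊆ I := Ioo_subset_Icc_self.trans (Icc_subset_Icc_right (by linarith))
  have hRI : Ioo t₀ (t₀ + δ) ⊆ I := Ioo_subset_Icc_self.trans (Icc_subset_Icc_left (by linarith))
  -- by Darboux, `φ'` has a constant sign on each side of `t₀`
  have hside : ∀ s ⊆ I, Convex ℝ s → t₀ ∉ s →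
      (∀ t ∈ s, g t * p t < 0) ∨ ∀ t ∈ s, 0 < g t * p t := fun s hsI hs ht₀ =>
    hasDerivWithinAt_forall_lt_or_forall_gt_of_forall_ne hs
      (fun t ht => (hφ t (hsI ht)).hasDerivWithinAt) fun t ht =>
        mul_ne_zero (fun h => ht₀ ((hg t (hsI ht)).1 h ▸ ht)) (hp t (hsI ht)).ne'
  have hpunct : ∀ s, |s - t₀| < δ → g s ≠ 0 → s ∈ Ioo (t₀ - δ) t₀ ∨ s ∈ Ioo t₀ (t₀ + δ) :=
    fun s hs hgs => mem_Ioo_or_mem_Ioo_of_abs_sub_lt hs fun h =>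
      hgs (h ▸ (hg t₀ ⟨by linarith, by linarith⟩).2 rfl)
  obtain ⟨⟨s₁, hs₁, hg₁⟩, ⟨s₂, hs₂, hg₂⟩⟩ := hchange δ hδ
  rcases hside _ hLI (convex_Ioo _ _) (fun h => h.2.false) with hL | hL <;>
    rcases hside _ hRI (convex_Ioo _ _) (fun h => h.1.false) with hR | hR
  · rcases hpunct s₁ hs₁ hg₁.ne' with h | h
    exacts [((mul_pos hg₁ (hp _ (hLI h))).not_gt (hL _ h)).elim,
      ((mul_pos hg₁ (hp _ (hRI h))).not_gt (hR _ h)).elim]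
  · exact Or.inr (isStrictPeak_of_hasDerivAt (by linarith) (by linarith)
      (fun t ht => (hφ t ht).neg) (fun t ht => neg_pos.2 (hL t ht))
      (fun t ht => neg_lt_zero.2 (hR t ht)))
  · exact Or.inl (isStrictPeak_of_hasDerivAt (by linarith) (by linarith) hφ hL hR)
  · rcases hpunct s₂ hs₂ hg₂.ne with h | h
    exacts [((mul_neg_of_neg_of_pos hg₂ (hp _ (hLI h))).not_gt (hL _ h)).elim,
      ((mul_neg_of_neg_of_pos hg₂ (hp _ (hRI h))).not_gt (hR _ h)).elim]

lemma localExtremaCount_eq_two_of_isStrictPeak {f w φ : ℝ → ℝ} {a t₀ b c : ℝ}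
    (hat : a < t₀) (htb : t₀ < b)
    (hf : ∀ t ∈ Icc a b, HasDerivAt f (w t * (φ t - c)) t) (hw : ∀ t ∈ Icc a b, 0 < w t)
    (hφ : ContinuousOn φ (Icc a b)) (hpeak : IsStrictPeak φ a t₀ b)
    (hc : c < φ t₀) (ha : φ a < c) (hb : φ b < c) :
    localExtremaCount f a b = 2 := by
  obtain ⟨t₁, ⟨hat₁, ht₁t₀⟩, hφt₁⟩ : c ∈ φ '' Ioo a t₀ :=
    intermediate_value_Ioo hat.le (hφ.mono (Icc_subset_Icc_right htb.le)) ⟨ha, hc⟩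
  obtain ⟨t₂, ⟨ht₀t₂, ht₂b⟩, hφt₂⟩ : c ∈ φ '' Ioo t₀ b :=
    intermediate_value_Ioo' htb.le (hφ.mono (Icc_subset_Icc_left hat.le)) ⟨hb, hc⟩
  have hderiv : ∀ t ∈ Ioo a b, deriv f t = w t * (φ t - c) := fun t ht =>
    (hf t (Ioo_subset_Icc_self ht)).deriv
  have ht₁ : t₁ ∈ Icc a t₀ := ⟨hat₁.le, ht₁t₀.le⟩
  have ht₂ : t₂ ∈ Icc t₀ b := ⟨ht₀t₂.le, ht₂b.le⟩
  refine localExtremaCount_eq_two hat₁ (ht₁t₀.trans ht₀t₂) ht₂b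
    (fun t ht => (hf t (Ioo_subset_Icc_self ht)).differentiableAt) (fun t ht => ?_)
    (fun t ht => ?_) (fun t ht => ?_)
  · have htab : t ∈ Ioo a b := ⟨ht.1, ht.2.trans (ht₁t₀.trans htb)⟩
    rw [hderiv t htab]
    refine mul_neg_of_pos_of_neg (hw t (Ioo_subset_Icc_self htab)) (sub_neg.2 ?_)
    exact hφt₁ ▸ hpeak.1 ⟨ht.1.le, (ht.2.trans ht₁t₀).le⟩ ht₁ ht.2
  · have htab : t ∈ Ioo a b := ⟨hat₁.trans ht.1, ht.2.trans ht₂b⟩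
    rw [hderiv t htab]
    refine mul_pos (hw t (Ioo_subset_Icc_self htab)) (sub_pos.2 ?_)
    rcases le_total t t₀ with htt₀ | htt₀
    · exact hφt₁ ▸ hpeak.1 ht₁ ⟨(hat₁.trans ht.1).le, htt₀⟩ ht.1
    · exact hφt₂ ▸ hpeak.2 ⟨htt₀, (ht.2.trans ht₂b).le⟩ ht₂ ht.2
  · have htab : t ∈ Ioo a b := ⟨(hat.trans ht₀t₂).trans ht.1, ht.2⟩
    rw [hderiv t htab]
    refine mul_neg_of_pos_of_neg (hw t (Ioo_subset_Icc_self htab)) (sub_neg.2 ?_)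
    exact hφt₂ ▸ hpeak.2 ht₂ ⟨(ht₀t₂.trans ht.1).le, ht.2.le⟩ ht.1

lemma exists_localExtremaCount_eq_zero_and_eq_two {F : ℝ → ℝ → ℝ} {u v : ℝ → ℝ} {a t₀ b : ℝ}
    (hat : a < t₀) (htb : t₀ < b)
    (hF : ∀ θ, ∀ t ∈ Icc a b, HasDerivAt (F θ) (cos θ * u t - sin θ * v t) t)
    (hu : ContinuousOn u (Icc a b)) (hv : ContinuousOn v (Icc a b))
    (hv_pos : ∀ t ∈ Icc a b, 0 < v t) (hu₀ : u t₀ = 0)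
    (hpeak : IsStrictPeak (fun t => u t / v t) a t₀ b) :
    ∃ ε₀ > 0, ∀ ε, 0 < ε → ε < ε₀ →
      localExtremaCount (F ε) a b = 0 ∧ localExtremaCount (F (-ε)) a b = 2 := by
  set φ := fun t => u t / v t
  have hφ₀ : φ t₀ = 0 := by simp only [φ, hu₀, zero_div]
  -- for `cos θ ≠ 0`, the critical points of `F θ` are where `φ` meets `tan θ`
  have hF' : ∀ θ, cos θ ≠ 0 → ∀ t ∈ Icc a b,
      HasDerivAt (F θ) (v t * cos θ * (φ t - tan θ)) t := by
    intro θ hθ t ht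
    convert hF θ t ht using 1
    rw [tan_eq_sin_div_cos]
    simp only [φ]
    field_simp [(hv_pos t ht).ne']
  have hφa : φ a < 0 := hφ₀ ▸ hpeak.1 (left_mem_Icc.2 hat.le) (right_mem_Icc.2 hat.le) hat
  have hφb : φ b < 0 := hφ₀ ▸ hpeak.2 (left_mem_Icc.2 htb.le) (right_mem_Icc.2 htb.le) htb
  set m := min (-φ a) (-φ b)
  refine ⟨arctan m, arctan_pos.2 (lt_min (neg_pos.2 hφa) (neg_pos.2 hφb)), fun ε hε hεm => ?_⟩
  have hεπ : ε < π / 2 := hεm.trans (arctan_lt_pi_div_two m)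
  have hcos : 0 < cos ε := cos_pos_of_mem_Ioo ⟨by linarith [pi_pos], hεπ⟩
  have htan : 0 < tan ε := tan_pos_of_pos_of_lt_pi_div_two hε hεπ
  have htan_m : tan ε < m := by
    simpa only [tan_arctan] using strictMonoOn_tan ⟨by linarith [pi_pos], hεπ⟩
      (arctan_mem_Ioo m) hεm
  constructor
  · refine localExtremaCount_eq_zero_of_deriv_ne_zero fun t ht => ?_
    rw [(hF' ε hcos.ne' t (Ioo_subset_Icc_self ht)).deriv]
    have hφt : φ t ≤ 0 := hφ₀ ▸ hpeak.apply_le (Ioo_subset_Icc_self ht)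
    exact mul_ne_zero (mul_pos (hv_pos t (Ioo_subset_Icc_self ht)) hcos).ne' (by linarith)
  · rw [← cos_neg] at hcos
    refine localExtremaCount_eq_two_of_isStrictPeak hat htb (hF' (-ε) hcos.ne')
      (fun t ht => mul_pos (hv_pos t ht) hcos) (hu.div hv fun t ht => (hv_pos t ht).ne') hpeak
      ?_ ?_ ?_ <;> rw [tan_neg]
    · linarith
    · linarith [min_le_left (-φ a) (-φ b)]
    · linarith [min_le_right (-φ a) (-φ b)]

lemma exists_localExtremaCount_eq_of_isStrictPeak_or {F : ℝ → ℝ → ℝ} {u v : ℝ → ℝ} {a t₀ b : ℝ}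
    (hat : a < t₀) (htb : t₀ < b)
    (hF : ∀ θ, ∀ t ∈ Icc a b, HasDerivAt (F θ) (cos θ * u t - sin θ * v t) t)
    (hu : ContinuousOn u (Icc a b)) (hv : ContinuousOn v (Icc a b))
    (hv_pos : ∀ t ∈ Icc a b, 0 < v t) (hu₀ : u t₀ = 0)
    (hpeak : IsStrictPeak (fun t => u t / v t) a t₀ b ∨
      IsStrictPeak (fun t => -(u t / v t)) a t₀ b) :
    ∃ ε₀ > 0, ∀ ε, 0 < ε → ε < ε₀ →
      localExtremaCount (F ε) a b = 0 ∧ localExtremaCount (F (-ε)) a b = 2 ∨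
      localExtremaCount (F ε) a b = 2 ∧ localExtremaCount (F (-ε)) a b = 0 := by
  rcases hpeak with hpeak | hvalley
  · obtain ⟨ε₀, hε₀, h⟩ :=
      exists_localExtremaCount_eq_zero_and_eq_two hat htb hF hu hv hv_pos hu₀ hpeak
    exact ⟨ε₀, hε₀, fun ε hε hεε₀ => Or.inl (h ε hε hεε₀)⟩
  -- a valley of `u / v` is a peak of `-u / v`, the slope function of the family `-F (-θ)`
  · have hG : ∀ θ, ∀ t ∈ Icc a b,
        HasDerivAt (fun s => -F (-θ) s) (cos θ * -u t - sin θ * v t) t := by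
      intro θ t ht
      have h := (hF (-θ) t ht).neg
      rw [cos_neg, sin_neg] at h
      exact h.congr_deriv (by ring)
    simp only [← neg_div] at hvalley
    obtain ⟨ε₀, hε₀, h⟩ := exists_localExtremaCount_eq_zero_and_eq_two hat htb hG hu.neg hv hv_pos
      (by rw [hu₀, neg_zero]) hvalley
    refine ⟨ε₀, hε₀, fun ε hε hεε₀ => Or.inr ?_⟩
    simpa only [localExtremaCount_neg, neg_neg, and_comm] using h ε hε hεε₀

lemma Function.Periodic.deriv {F : Type*} [NormedAddCommGroup F] [NormedSpace ℝ F]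
    {f : ℝ → F} {c : ℝ} (h : Function.Periodic f c) : Function.Periodic (deriv f) c := fun x => by
  rw [← deriv_comp_add_const, h.funext]

lemma Function.Periodic.eventually_nhdsNE_ne {α : Type*} {g : ℝ → α} (hg : Function.Periodic g 1)
    {y : α} (hfin : {t | t ∈ Ico (0 : ℝ) 1 ∧ g t = y}.Finite) (t₀ : ℝ) :
    ∀ᶠ t in 𝓝[≠] t₀, g t ≠ y := by
  set K := {t | t ∈ Icc (t₀ - 1) (t₀ + 1) ∧ g t = y}
  -- a level point `t` near `t₀` is a translate by `⌊t⌋ ∈ [⌊t₀⌋ - 1, ⌊t₀⌋ + 1]` of one in `[0, 1)`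
  have hK : K.Finite := by
    refine ((Finset.Icc (⌊t₀⌋ - 1) (⌊t₀⌋ + 1)).finite_toSet.biUnion fun n _ =>
      hfin.image (· + (n : ℝ))).subset fun t ⟨ht, hgt⟩ => ?_
    simp only [Set.mem_iUnion, Finset.coe_Icc, mem_Icc, mem_image]
    refine ⟨⌊t⌋, ⟨?_, ?_⟩, Int.fract t, ⟨⟨Int.fract_nonneg t, Int.fract_lt_one t⟩, ?_⟩,
      Int.fract_add_floor t⟩
    · simpa [Int.floor_sub_one] using Int.floor_mono ht.1
    · simpa [Int.floor_add_one] using Int.floor_mono ht.2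
    · rw [Int.fract, ← hgt]
      simpa only [mul_one] using hg.sub_int_mul_eq (x := t) ⌊t⌋
  filter_upwards
    [nhdsWithin_le_nhds ((hK.sdiff (t := {t₀})).isClosed.compl_mem_nhds fun h => h.2 rfl),
    self_mem_nhdsWithin, nhdsWithin_le_nhds (Icc_mem_nhds (sub_one_lt t₀) (lt_add_one t₀))]
    with t hK ht hmem hgt
  exact hK ⟨⟨hmem, hgt⟩, ht⟩

lemma HasDerivAt.inner_const {E : Type*} [NormedAddCommGroup E] [InnerProductSpace ℝ E]
    {γ : ℝ → E} {γ' : E} {t : ℝ} (h : HasDerivAt γ γ' t) (w : E) :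
    HasDerivAt (fun s => ⟪γ s, w⟫) ⟪γ', w⟫ t := by
  simpa using h.inner ℝ (hasDerivAt_const t w)

lemma HasDerivAt.euclideanSpace_apply {ι : Type*} [Fintype ι] {γ : ℝ → EuclideanSpace ℝ ι}
    {γ' : EuclideanSpace ℝ ι} {t : ℝ} (h : HasDerivAt γ γ' t) (i : ι) :
    HasDerivAt (fun s => γ s i) (γ' i) t := by
  simpa [Function.comp_def] using (EuclideanSpace.proj (𝕜 := ℝ) i).hasFDerivAt.comp_hasDerivAt t h

lemma inner_E2 (x y : E2) : ⟪x, y⟫ = x 0 * y 0 + x 1 * y 1 := by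
  simp only [PiLp.inner_apply, RCLike.inner_apply, conj_trivial, Fin.sum_univ_two]
  ring

lemma E2.ext {x y : E2} (h0 : x 0 = y 0) (h1 : x 1 = y 1) : x = y := by
  ext i; fin_cases i <;> assumption

lemma rot2_apply_zero (θ : ℝ) (x : E2) : rot2 θ x 0 = cos θ * x 0 - sin θ * x 1 := rfl

lemma rot2_apply_one (θ : ℝ) (x : E2) : rot2 θ x 1 = sin θ * x 0 + cos θ * x 1 := rfl

lemma rot2_neg (θ : ℝ) (x : E2) : rot2 θ (-x) = -rot2 θ x := by
  refine E2.ext ?_ ?_ <;> simp only [rot2_apply_zero, rot2_apply_one, PiLp.neg_apply] <;> ring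

lemma rot2_smul (θ c : ℝ) (x : E2) : rot2 θ (c • x) = c • rot2 θ x := by
  refine E2.ext ?_ ?_ <;>
    simp only [rot2_apply_zero, rot2_apply_one, PiLp.smul_apply, smul_eq_mul] <;> ring

lemma inner_rot2_pi_div_two_self (x : E2) : ⟪x, rot2 (π / 2) x⟫ = 0 := by
  rw [inner_E2, rot2_apply_zero, rot2_apply_one, cos_pi_div_two, sin_pi_div_two]
  ring

lemma inner_rot2_rot2_pi_div_two (θ : ℝ) (x y : E2) :
    ⟪x, rot2 θ (rot2 (π / 2) y)⟫ = cos θ * ⟪x, rot2 (π / 2) y⟫ - sin θ * ⟪x, y⟫ := by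
  simp only [inner_E2, rot2_apply_zero, rot2_apply_one, cos_pi_div_two, sin_pi_div_two]
  ring

lemma inner_rot2_pi_div_two_mul_sub (a b y : E2) :
    ⟪b, rot2 (π / 2) y⟫ * ⟪a, y⟫ - ⟪a, rot2 (π / 2) y⟫ * ⟪b, y⟫ =
      ⟪b, rot2 (π / 2) a⟫ * ‖y‖ ^ 2 := by
  rw [← real_inner_self_eq_norm_sq]
  simp only [inner_E2, rot2_apply_zero, rot2_apply_one, cos_pi_div_two, sin_pi_div_two]
  ring

lemma hasDerivAt_inner_rot2_div_inner {γ : ℝ → E2} {γ' y : E2} {t : ℝ} (hγ : HasDerivAt γ γ' t)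
    (hy : ‖y‖ = 1) (ht : ⟪γ t, y⟫ ≠ 0) :
    HasDerivAt (fun s => ⟪γ s, rot2 (π / 2) y⟫ / ⟪γ s, y⟫)
      (⟪γ', rot2 (π / 2) (γ t)⟫ / ⟪γ t, y⟫ ^ 2) t :=
  ((hγ.inner_const _).div (hγ.inner_const y) ht).congr_deriv (by
    rw [inner_rot2_pi_div_two_mul_sub, hy, one_pow, mul_one])

def unitTangent (α : ℝ → E2) (t : ℝ) : E2 :=
  ‖deriv α t‖⁻¹ • deriv α t

section PlaneCurve

variable {α : ℝ → E2}

lemma signedCurv2_periodic {c : ℝ} (h : Function.Periodic α c) :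
    Function.Periodic (signedCurv2 α) c := by
  have hcoord : ∀ i, Function.Periodic (fun s => α s i) c := fun i s => congrArg (· i) (h s)
  intro t
  simp only [signedCurv2, (hcoord 0).deriv t, (hcoord 1).deriv t, (hcoord 0).deriv.deriv t,
    (hcoord 1).deriv.deriv t, h.deriv t]

lemma signedCurv2_eq (hα : Differentiable ℝ α) (hα' : Differentiable ℝ (deriv α)) (t : ℝ) :
    signedCurv2 α t =
      ⟪deriv (deriv α) t, rot2 (π / 2) (deriv α t)⟫ / ‖deriv α t‖ ^ 3 := by
  have hcoord : ∀ i, deriv (fun s => α s i) = fun s => deriv α s i := fun i =>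
    funext fun s => ((hα s).hasDerivAt.euclideanSpace_apply i).deriv
  rw [signedCurv2, hcoord, hcoord, ((hα' t).hasDerivAt.euclideanSpace_apply 0).deriv,
    ((hα' t).hasDerivAt.euclideanSpace_apply 1).deriv]
  congr 1
  simp only [inner_E2, rot2_apply_zero, rot2_apply_one, cos_pi_div_two, sin_pi_div_two]
  ring

lemma unitNormal_eq (t : ℝ) : unitNormal α t = rot2 (π / 2) (unitTangent α t) := rfl

lemma norm_unitTangent {t : ℝ} (h : deriv α t ≠ 0) : ‖unitTangent α t‖ = 1 :=
  norm_smul_inv_norm h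

lemma inner_deriv_unitTangent (t : ℝ) : ⟪deriv α t, unitTangent α t⟫ = ‖deriv α t‖ := by
  rw [unitTangent, inner_smul_right, real_inner_self_eq_norm_sq, ← div_eq_inv_mul, sq,
    mul_self_div_self]

lemma inner_deriv_unitNormal (t : ℝ) : ⟪deriv α t, unitNormal α t⟫ = 0 := by
  rw [unitNormal_eq, unitTangent, rot2_smul, inner_smul_right, inner_rot2_pi_div_two_self,
    mul_zero]

lemma hasDerivAt_inner_rot2_unitNormal (hα : Differentiable ℝ α) (θ t₀ t : ℝ) :
    HasDerivAt (fun s => ⟪α s, rot2 θ (unitNormal α t₀)⟫)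
      (cos θ * ⟪deriv α t, unitNormal α t₀⟫ - sin θ * ⟪deriv α t, unitTangent α t₀⟫) t := by
  rw [unitNormal_eq, ← inner_rot2_rot2_pi_div_two]
  exact (hα t).hasDerivAt.inner_const _

lemma hasDerivAt_inner_unitNormal_div_inner_unitTangent (hα : Differentiable ℝ α)
    (hα' : Differentiable ℝ (deriv α)) {t₀ t : ℝ} (ht₀ : deriv α t₀ ≠ 0) (hreg : deriv α t ≠ 0)
    (ht : ⟪deriv α t, unitTangent α t₀⟫ ≠ 0) :
    HasDerivAt (fun s => ⟪deriv α s, unitNormal α t₀⟫ / ⟪deriv α s, unitTangent α t₀⟫)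
      (signedCurv2 α t * (‖deriv α t‖ ^ 3 / ⟪deriv α t, unitTangent α t₀⟫ ^ 2)) t := by
  refine (hasDerivAt_inner_rot2_div_inner (hα' t).hasDerivAt (norm_unitTangent ht₀)
    ht).congr_deriv ?_
  rw [signedCurv2_eq hα hα' t]
  field_simp [norm_ne_zero_iff.2 hreg]

lemma exists_Icc_inner_unitTangent_pos_and_signedCurv2_eq_zero_iff
    (hα' : Differentiable ℝ (deriv α)) (hper : Function.Periodic α 1)
    (hfin : (inflectionSet α).Finite) {t₀ : ℝ} (ht₀ : deriv α t₀ ≠ 0)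
    (h₀ : signedCurv2 α t₀ = 0) :
    ∃ δ > 0, ∀ t ∈ Icc (t₀ - δ) (t₀ + δ),
      0 < ⟪deriv α t, unitTangent α t₀⟫ ∧ (signedCurv2 α t = 0 ↔ t = t₀) := by
  have hv₀ : 0 < ⟪deriv α t₀, unitTangent α t₀⟫ := by
    rw [inner_deriv_unitTangent]
    exact norm_pos_iff.2 ht₀
  have hev : ∀ᶠ t in 𝓝 t₀,
      0 < ⟪deriv α t, unitTangent α t₀⟫ ∧ (signedCurv2 α t = 0 ↔ t = t₀) := by
    filter_upwards [(hα'.continuous.inner continuous_const).continuousAt.eventually_const_lt hv₀,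
      eventually_nhdsWithin_iff.1 ((signedCurv2_periodic hper).eventually_nhdsNE_ne hfin t₀)]
      with t hv hκ
    exact ⟨hv, fun h => by_contra fun hne => hκ hne h, fun h => h ▸ h₀⟩
  simpa only [Metric.nhds_basis_closedBall.eventually_iff, Real.closedBall_eq_Icc] using hev

end PlaneCurve

/-- The unit normal (and its negative) at an s-inflection point is a local extrema
changing vector: nearby directions on the two sides of it see local extrema counts
near the inflection point differing by exactly `2`. -/
theorem normal_at_s_inflection_is_locally_extrema_changing (α : ℝ → E2)
    (hsmooth : ContDiff ℝ 2 α) (hper : Function.Periodic α 1)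
    (hreg : ∀ t : ℝ, deriv α t ≠ 0)
    (hfin : (inflectionSet α).Finite)
    (hs : ∀ t : ℝ, signedCurv2 α t = 0 → SignChangeAt (signedCurv2 α) t)
    (t₀ : ℝ) (h₀ : signedCurv2 α t₀ = 0)
    (N₀ : E2) (hN₀ : N₀ = unitNormal α t₀ ∨ N₀ = -unitNormal α t₀) :
    ∃ δ > (0:ℝ), ∃ ε₀ > (0:ℝ), ∀ ε : ℝ, 0 < ε → ε < ε₀ →
      ((localExtremaCount (fun s => ⟪α s, rot2 ε N₀⟫) (t₀ - δ) (t₀ + δ) : ℤ) -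
          (localExtremaCount (fun s => ⟪α s, rot2 (-ε) N₀⟫) (t₀ - δ) (t₀ + δ) : ℤ) = 2 ∨
       (localExtremaCount (fun s => ⟪α s, rot2 (-ε) N₀⟫) (t₀ - δ) (t₀ + δ) : ℤ) -
          (localExtremaCount (fun s => ⟪α s, rot2 ε N₀⟫) (t₀ - δ) (t₀ + δ) : ℤ) = 2) := by
  have hα : Differentiable ℝ α := hsmooth.differentiable (by norm_num)
  have hα' : Differentiable ℝ (deriv α) := (hsmooth.deriv' (n := 1)).differentiable one_ne_zero
  wlog hN : N₀ = unitNormal α t₀ generalizing N₀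
  · obtain rfl := hN₀.resolve_left hN
    simpa only [rot2_neg, inner_neg_right, localExtremaCount_neg] using this _ (Or.inl rfl) rfl
  subst hN
  obtain ⟨δ, hδ, hnear⟩ :=
    exists_Icc_inner_unitTangent_pos_and_signedCurv2_eq_zero_iff hα' hper hfin (hreg t₀) h₀
  refine ⟨δ, hδ, ?_⟩
  have hpeak := isStrictPeak_or_of_signChangeAt hδ
    (fun t ht => hasDerivAt_inner_unitNormal_div_inner_unitTangent hα hα' (hreg t₀) (hreg t)
      (hnear t ht).1.ne')
    (fun t ht => div_pos (pow_pos (norm_pos_iff.2 (hreg t)) 3) (pow_pos (hnear t ht).1 2))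
    (fun t ht => (hnear t ht).2) (hs t₀ h₀)
  obtain ⟨ε₀, hε₀, hcount⟩ := exists_localExtremaCount_eq_of_isStrictPeak_or (by linarith)
    (by linarith) (fun θ t _ => hasDerivAt_inner_rot2_unitNormal hα θ t₀ t)
    (hα'.continuous.inner continuous_const).continuousOn
    (hα'.continuous.inner continuous_const).continuousOn (fun t ht => (hnear t ht).1)
    (inner_deriv_unitNormal t₀) hpeak
  refine ⟨ε₀, hε₀, fun ε hε hεε₀ => ?_⟩
  rcases hcount ε hε hεε₀ with ⟨h, h'⟩ | ⟨h, h'⟩ <;> simp [h, h']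

end
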